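/- Let 1 < p < ∞ and (x_i) ∈ ℓ^p(X) with ‖(x_i)‖_p = 1. Then the state space S_{(x_i)} ⊆ ℓ^q(X*) is weakly compact if and only if for each i ∈ ℕ with x_i ≠ 0, the state space S_{x_i/‖x_i‖} ⊆ X* is weakly compact. -/

import Mathlib

open NormedSpace

/-- The topology on `A` induced by a pairing `A → (B → ℝ)`. -/
def pairingTop {A B : Type*} (f : A → B → ℝ) : TopologicalSpace A :=
  TopologicalSpace.induced f Pi.topologicalSpace

/-- The weak topology on `ℓ^q(X*)`. -/
noncomputable def wTop {X : Type*} [NormedAddCommGroup X] [NormedSpace ℝ X]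
    (q : ENNReal) [Fact (1 ≤ q)] :
    TopologicalSpace (lp (fun _ : ℕ => StrongDual ℝ X) q) :=
  pairingTop fun φ (Λ : StrongDual ℝ (lp (fun _ : ℕ => StrongDual ℝ X) q)) => Λ φ

/-- The weak topology on `X*`. -/
noncomputable def wTopDual (X : Type*) [NormedAddCommGroup X] [NormedSpace ℝ X] :
    TopologicalSpace (StrongDual ℝ X) :=
  pairingTop fun (g : StrongDual ℝ X)
    (Λ : StrongDual ℝ (StrongDual ℝ X)) => Λ g

/-!
By the equality case of Hölder's inequality, `(ψ_i) ∈ ℓ^q(X*)` is a state of the unit vector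
`(x_i)` exactly when every coordinate satisfies `‖ψ_i‖ = ‖x_i‖^(p-1)` and `ψ_i(x_i) = ‖x_i‖^p`.
For `x_i ≠ 0` these coordinates form the set `‖x_i‖^(p-1) • S_{x_i/‖x_i‖}`, for `x_i = 0` only
`0`, and `S_{(x_i)}` is the product of these sets. Projecting onto one coordinate (Hahn–Banach
fills in the others) carries weak compactness from `S_{(x_i)}` to each `S_{x_i/‖x_i‖}`.
Conversely the product of the coordinate sets is compact by Tychonoff and maps continuously onto
`S_{(x_i)}` with its weak topology: the coordinate norms are prescribed, so all points of the
product have the same `ℓ^q` tails, and on the product every functional on `ℓ^q(X*)` is a uniform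
limit of finite sums of coordinate functionals.
-/

open Filter Topology Pointwise

namespace Real.HolderConjugate

variable {p q : ℝ} {a b c : ℕ → ℝ}

theorem eq_rpow_of_hasSum_of_le_mul (hpq : p.HolderConjugate q) (ha : ∀ i, 0 ≤ a i)
    (hb : ∀ i, 0 ≤ b i) (hc : ∀ i, c i ≤ a i * b i) (hsa : HasSum (fun i => a i ^ p) 1)
    (hsb : HasSum (fun i => b i ^ q) 1) (hsc : HasSum c 1) (i : ℕ) :
    c i = a i ^ p ∧ b i = a i ^ (p - 1) := by
  have hyoung : ∀ j, a j * b j ≤ a j ^ p / p + b j ^ q / q := fun j =>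
    young_inequality_of_nonneg (ha j) (hb j) hpq
  have hsum : HasSum (fun j => a j ^ p / p + b j ^ q / q) 1 := by
    simpa [one_div, hpq.inv_add_inv_eq_one] using (hsa.div_const p).add (hsb.div_const q)
  have hci : c i = a i ^ p / p + b i ^ q / q := by
    by_contra hne
    exact (hasSum_lt (fun j => (hc j).trans (hyoung j))
      (((hc i).trans (hyoung i)).lt_of_ne hne) hsc hsum).false
  have hab : a i * b i = a i ^ p / p + b i ^ q / q :=
    le_antisymm (hyoung i) (hci.symm.le.trans (hc i))
  have hbq : b i ^ q = (a i ^ (p - 1)) ^ q := by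
    rw [← rpow_mul (ha i), hpq.sub_one_mul_conj]
    exact ((young_inequality_eq_iff_of_nonneg (ha i) (hb i) hpq).1 hab).symm
  have hb' : b i = a i ^ (p - 1) :=
    (rpow_left_inj (hb i) (rpow_nonneg (ha i) _) hpq.symm.ne_zero).1 hbq
  refine ⟨?_, hb'⟩
  rw [hci, ← hab, hb', ← rpow_one_add' (ha i) (by linarith [hpq.lt]), add_sub_cancel]

end Real.HolderConjugate

section PairingTopology

variable {A B Z : Type*} (f : A → B → ℝ)

theorem continuous_pairingTop_apply (b : B) : @Continuous A ℝ (pairingTop f) _ (f · b) :=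
  @Continuous.comp _ _ _ (pairingTop f) _ _ _ _ (continuous_apply b) continuous_induced_dom

theorem continuous_pairingTop_of_forall [TopologicalSpace Z] {g : Z → A}
    (h : ∀ b, Continuous fun z => f (g z) b) : @Continuous Z A _ (pairingTop f) g :=
  continuous_induced_rng.2 (continuous_pi h)

end PairingTopology

/-- The weak topology of `E`, i.e. the topology of `WeakSpace ℝ E`; `wTop q` and `wTopDual X`
unfold to it. -/
abbrev weakTop (E : Type*) [NormedAddCommGroup E] [NormedSpace ℝ E] : TopologicalSpace E :=
  pairingTop fun (x : E) (Λ : StrongDual ℝ E) => Λ x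

section WeakTopology

variable {E F : Type*} [NormedAddCommGroup E] [NormedSpace ℝ E] [NormedAddCommGroup F]
  [NormedSpace ℝ F]

theorem ContinuousLinearMap.continuous_weakTop (T : E →L[ℝ] F) :
    @Continuous E F (weakTop E) (weakTop F) T :=
  (WeakSpace.map T).continuous

theorem IsCompact.weakTop_smul {s : Set E} (hs : @IsCompact E (weakTop E) s) (c : ℝ) :
    @IsCompact E (weakTop E) (c • s) := by
  simpa [← Set.image_smul] using @IsCompact.image _ _ (weakTop E) (weakTop E) _ _ hs
    (c • ContinuousLinearMap.id ℝ E).continuous_weakTop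

end WeakTopology

section LpWeakCompactness

variable {E : Type*} [NormedAddCommGroup E] {q : ENNReal} [Fact (1 ≤ q)]

theorem lp.norm_sub_sum_single_eq_of_norm_rpow_eq (hq : 0 < q.toReal) {f : lp (fun _ : ℕ => E) q}
    {b : ℕ → ℝ} (hfb : ∀ j, ‖f j‖ ^ q.toReal = b j) (N : ℕ) :
    ‖f - ∑ j ∈ Finset.range N, lp.single q j (f j)‖ =
      (∑' j, b j - ∑ j ∈ Finset.range N, b j) ^ q.toReal⁻¹ := by
  have hf : ‖f‖ ^ q.toReal = ∑' j, b j := by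
    rw [lp.norm_rpow_eq_tsum hq f]
    exact tsum_congr hfb
  have h := lp.norm_compl_sum_single hq f (Finset.range N)
  rw [hf, Finset.sum_congr rfl fun j _ => hfb j] at h
  rw [← h, Real.rpow_rpow_inv (norm_nonneg _) hq.ne']

variable [NormedSpace ℝ E]

theorem continuous_weakTop_lp_of_norm_rpow_eq (hq : q ≠ ⊤) {Z : Type*} [TopologicalSpace Z]
    {g : Z → lp (fun _ : ℕ => E) q} {b : ℕ → ℝ} (hb : Summable b)
    (hgb : ∀ z j, ‖g z j‖ ^ q.toReal = b j)
    (hg : ∀ j, @Continuous Z E _ (weakTop E) fun z => g z j) :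
    @Continuous Z _ _ (weakTop _) g := by
  have hq0 : 0 < q.toReal := ENNReal.toReal_pos (zero_lt_one.trans_le Fact.out).ne' hq
  refine continuous_pairingTop_of_forall _ fun Λ => ?_
  let G : ℕ → Z → ℝ := fun N z => ∑ j ∈ Finset.range N, Λ (lp.single q j (g z j))
  have hG : ∀ N, Continuous (G N) := fun N => continuous_finsetSum _ fun j _ =>
    @Continuous.comp _ _ _ _ (weakTop E) _ _ _
      (continuous_pairingTop_apply _ (Λ.comp (lp.singleContinuousLinearMap ℝ _ q j))) (hg j)
  let tail : ℕ → ℝ := fun N => ‖Λ‖ * (∑' j, b j - ∑ j ∈ Finset.range N, b j) ^ q.toReal⁻¹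
  have htail : ∀ N z, dist (Λ (g z)) (G N z) ≤ tail N := fun N z => by
    simp only [G, dist_eq_norm, ← map_sum, ← map_sub]
    exact (Λ.le_opNorm _).trans_eq <| by
      rw [lp.norm_sub_sum_single_eq_of_norm_rpow_eq hq0 (hgb z) N]
  have hlim : Tendsto tail atTop (𝓝 0) := by
    have h := ((tendsto_const_nhds (x := ∑' j, b j)).sub hb.tendsto_sum_tsum_nat).rpow_const
      (p := q.toReal⁻¹) (Or.inr (inv_nonneg.2 hq0.le))
    simpa [Real.zero_rpow (inv_ne_zero hq0.ne')] using h.const_mul ‖Λ‖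
  refine TendstoUniformly.continuous ?_ (Frequently.of_forall (f := atTop) hG)
  rw [Metric.tendstoUniformly_iff]
  intro ε hε
  filter_upwards [hlim.eventually_lt_const hε] with N hN z
  exact (htail N z).trans_lt hN

theorem isCompact_weakTop_lp (hq : q ≠ ⊤) {K : ℕ → Set E} (hK : ∀ j, @IsCompact E (weakTop E) (K j))
    {b : ℕ → ℝ} (hb : Summable b) (hKb : ∀ j, ∀ x ∈ K j, ‖x‖ ^ q.toReal = b j) :
    @IsCompact _ (weakTop _) {f : lp (fun _ : ℕ => E) q | ∀ j, f j ∈ K j} := by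
  let := weakTop E
  have hmem (f : Set.univ.pi K) : Memℓp (f : ℕ → E) q :=
    memℓp_gen (hb.congr fun j => (hKb j _ (f.2 j (Set.mem_univ j))).symm)
  let F : Set.univ.pi K → lp (fun _ : ℕ => E) q := fun f => ⟨f.1, hmem f⟩
  have hF : @Continuous _ _ _ (weakTop _) F :=
    continuous_weakTop_lp_of_norm_rpow_eq hq hb (fun f j => hKb j _ (f.2 j (Set.mem_univ j)))
      fun j => (continuous_apply j).comp continuous_subtype_val
  have hrange : Set.range F = {f : lp (fun _ : ℕ => E) q | ∀ j, f j ∈ K j} := by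
    ext f
    exact ⟨by rintro ⟨g, rfl⟩ j; exact g.2 j (Set.mem_univ j),
      fun hf => ⟨⟨f, fun j _ => hf j⟩, rfl⟩⟩
  rw [← hrange]
  exact @isCompact_range _ _ _ (weakTop _)
    (isCompact_iff_compactSpace.1 (isCompact_univ_pi hK)) _ hF

end LpWeakCompactness

section StateSpace

variable {X : Type*} [NormedAddCommGroup X] [NormedSpace ℝ X]

def stateSpace (x : X) : Set (StrongDual ℝ X) :=
  {g | ‖g‖ = 1 ∧ g x = 1}

def scaledStateSpace (x : X) (r : ℝ) : Set (StrongDual ℝ X) :=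
  {h | ‖h‖ = ‖x‖ ^ (r - 1) ∧ h x = ‖x‖ ^ r}

theorem scaledStateSpace_zero {r : ℝ} (hr : 1 < r) : scaledStateSpace (0 : X) r = {0} := by
  ext h
  simp [scaledStateSpace, Real.zero_rpow (sub_ne_zero.2 hr.ne'),
    Real.zero_rpow (by linarith : r ≠ 0)]

theorem scaledStateSpace_eq_smul {x : X} (hx : x ≠ 0) (r : ℝ) :
    scaledStateSpace x r = (‖x‖ ^ (r - 1)) • stateSpace (‖x‖⁻¹ • x) := by
  have hx' : 0 < ‖x‖ := norm_pos_iff.2 hx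
  have hc : 0 < ‖x‖ ^ (r - 1) := Real.rpow_pos_of_pos hx' _
  have hr : ‖x‖ ^ r = ‖x‖ ^ (r - 1) * ‖x‖ := by
    rw [← Real.rpow_add_one hx'.ne', sub_add_cancel]
  ext h
  rw [Set.mem_smul_set_iff_inv_smul_mem₀ hc.ne']
  simp only [scaledStateSpace, stateSpace, Set.mem_ofPred_eq, norm_smul, smul_apply,
    map_smul, smul_eq_mul, Real.norm_eq_abs, abs_inv, abs_of_pos hc, hr]
  rw [inv_mul_eq_one₀ hc.ne', inv_mul_eq_one₀ hx'.ne', eq_inv_mul_iff_mul_eq₀ hc.ne']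
  exact and_congr eq_comm eq_comm

theorem scaledStateSpace_nonempty {r : ℝ} (hr : 1 < r) (x : X) :
    (scaledStateSpace x r).Nonempty := by
  rcases eq_or_ne x 0 with rfl | hx
  · simp [scaledStateSpace_zero hr]
  · obtain ⟨g, hg, hgx⟩ := exists_dual_vector ℝ x (norm_ne_zero_iff.2 hx)
    rw [scaledStateSpace_eq_smul hx]
    refine ⟨_, Set.smul_mem_smul_set ⟨hg, ?_⟩⟩
    simp [hgx, hx]

theorem isCompact_weakTop_scaledStateSpace_iff {r : ℝ} (hr : 1 < r) (x : X) :
    @IsCompact _ (weakTop _) (scaledStateSpace x r) ↔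
      (x ≠ 0 → @IsCompact _ (weakTop _) (stateSpace (‖x‖⁻¹ • x))) := by
  rcases eq_or_ne x 0 with rfl | hx
  · simp [scaledStateSpace_zero hr]
  · have hc : ‖x‖ ^ (r - 1) ≠ 0 := (Real.rpow_pos_of_pos (norm_pos_iff.2 hx) _).ne'
    rw [scaledStateSpace_eq_smul hx]
    exact ⟨fun h _ => by simpa [inv_smul_smul₀ hc] using h.weakTop_smul (‖x‖ ^ (r - 1))⁻¹,
      fun h => (h hx).weakTop_smul _⟩

theorem norm_rpow_of_mem_scaledStateSpace {p q : ℝ} (hpq : p.HolderConjugate q) {x : X}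
    {h : StrongDual ℝ X} (hh : h ∈ scaledStateSpace x p) : ‖h‖ ^ q = ‖x‖ ^ p := by
  rw [hh.1, ← Real.rpow_mul (norm_nonneg x), hpq.sub_one_mul_conj]

end StateSpace

section LpStateSpace

variable {X : Type*} [NormedAddCommGroup X] [NormedSpace ℝ X] {p q : ENNReal}

theorem memℓp_of_forall_mem_scaledStateSpace (hpq : p.toReal.HolderConjugate q.toReal)
    (xs : lp (fun _ : ℕ => X) p) {f : ℕ → StrongDual ℝ X}
    (hf : ∀ j, f j ∈ scaledStateSpace (xs j) p.toReal) : Memℓp f q :=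
  memℓp_gen <| (xs.2.summable hpq.pos).congr fun j =>
    (norm_rpow_of_mem_scaledStateSpace hpq (hf j)).symm

variable [Fact (1 ≤ q)]

variable (q) in
def lpStateSpace (xs : lp (fun _ : ℕ => X) p) : Set (lp (fun _ : ℕ => StrongDual ℝ X) q) :=
  {ψ | ‖ψ‖ = 1 ∧ ∑' i, ψ i (xs i) = 1}

theorem mem_lpStateSpace_iff (hpq : p.toReal.HolderConjugate q.toReal)
    {xs : lp (fun _ : ℕ => X) p} (hxs : ‖xs‖ = 1) (ψ : lp (fun _ : ℕ => StrongDual ℝ X) q) :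
    ψ ∈ lpStateSpace q xs ↔ ∀ j, ψ j ∈ scaledStateSpace (xs j) p.toReal := by
  have hxs' : HasSum (fun j => ‖xs j‖ ^ p.toReal) 1 := by
    simpa [hxs] using lp.hasSum_norm hpq.pos xs
  constructor
  · rintro ⟨hψ, hψxs⟩ j
    have hψ' : HasSum (fun j => ‖ψ j‖ ^ q.toReal) 1 := by
      simpa [hψ] using lp.hasSum_norm hpq.symm.pos ψ
    have hsum : Summable fun j => ψ j (xs j) := by
      by_contra h
      simp [tsum_eq_zero_of_not_summable h] at hψxs
    have hle (j : ℕ) : ψ j (xs j) ≤ ‖xs j‖ * ‖ψ j‖ :=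
      (Real.le_norm_self _).trans (((ψ j).le_opNorm _).trans_eq (mul_comm _ _))
    obtain ⟨h1, h2⟩ := hpq.eq_rpow_of_hasSum_of_le_mul (fun j => norm_nonneg _)
      (fun j => norm_nonneg _) hle hxs' hψ' (hψxs ▸ hsum.hasSum) j
    exact ⟨h2, h1⟩
  · intro hψ
    have hnorm : ‖ψ‖ ^ q.toReal = 1 := by
      rw [lp.norm_rpow_eq_tsum hpq.symm.pos,
        tsum_congr fun j => norm_rpow_of_mem_scaledStateSpace hpq (hψ j), hxs'.tsum_eq]
    refine ⟨?_, (tsum_congr fun j => (hψ j).2).trans hxs'.tsum_eq⟩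
    rw [← Real.one_rpow q.toReal] at hnorm
    exact (Real.rpow_left_inj (norm_nonneg _) zero_le_one hpq.symm.ne_zero).1 hnorm

theorem lpStateSpace_eq_setOf (hpq : p.toReal.HolderConjugate q.toReal)
    {xs : lp (fun _ : ℕ => X) p} (hxs : ‖xs‖ = 1) :
    lpStateSpace q xs = {ψ | ∀ j, ψ j ∈ scaledStateSpace (xs j) p.toReal} :=
  Set.ext (mem_lpStateSpace_iff hpq hxs)

theorem image_apply_lpStateSpace (hpq : p.toReal.HolderConjugate q.toReal)
    {xs : lp (fun _ : ℕ => X) p} (hxs : ‖xs‖ = 1) (i : ℕ) :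
    (fun ψ : lp (fun _ : ℕ => StrongDual ℝ X) q => ψ i) '' lpStateSpace q xs =
      scaledStateSpace (xs i) p.toReal := by
  refine Set.Subset.antisymm ?_ fun h hh => ?_
  · rintro _ ⟨ψ, hψ, rfl⟩
    exact (mem_lpStateSpace_iff hpq hxs ψ).1 hψ i
  · classical
    let f : ℕ → StrongDual ℝ X :=
      Function.update (fun j => (scaledStateSpace_nonempty hpq.lt (xs j)).some) i h
    have hf (j : ℕ) : f j ∈ scaledStateSpace (xs j) p.toReal := by
      rcases eq_or_ne j i with rfl | hj
      · simpa [f] using hh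
      · simpa [f, hj] using (scaledStateSpace_nonempty hpq.lt (xs j)).some_mem
    refine ⟨⟨f, memℓp_of_forall_mem_scaledStateSpace hpq xs hf⟩,
      (mem_lpStateSpace_iff hpq hxs _).2 hf, ?_⟩
    simp [f]

end LpStateSpace

theorem stmt8_general {X : Type*} [NormedAddCommGroup X] [NormedSpace ℝ X]
    (p q : ENNReal) [Fact (1 ≤ q)]
    (hp : 1 < p) (hp' : p ≠ ⊤) (hpq : 1 / p + 1 / q = 1)
    (xs : lp (fun _ : ℕ => X) p) (hxs : ‖xs‖ = 1) :
    @IsCompact _ (wTop q) {ψ : lp (fun _ : ℕ => StrongDual ℝ X) q |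
        ‖ψ‖ = 1 ∧ ∑' i, ψ i (xs i) = 1} ↔
      ∀ i, xs i ≠ 0 → @IsCompact _ (wTopDual X)
        {g : StrongDual ℝ X | ‖g‖ = 1 ∧ g (‖xs i‖⁻¹ • xs i) = 1} := by
  have : p.HolderConjugate q := ENNReal.holderConjugate_iff.2 (by simpa [one_div] using hpq)
  have hq : q ≠ ⊤ := ((ENNReal.HolderConjugate.lt_top_iff_one_lt q p).2 hp).ne
  have hpq' : p.toReal.HolderConjugate q.toReal := ENNReal.HolderConjugate.toReal_of_ne_top hp' hq
  change @IsCompact _ (weakTop _) (lpStateSpace q xs) ↔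
    ∀ i, xs i ≠ 0 → @IsCompact _ (weakTop _) (stateSpace (‖xs i‖⁻¹ • xs i))
  refine ⟨fun hS i => (isCompact_weakTop_scaledStateSpace_iff hpq'.lt (xs i)).1 ?_, fun hK => ?_⟩
  · rw [← image_apply_lpStateSpace hpq' hxs i]
    exact @IsCompact.image _ _ (weakTop _) (weakTop _) _ _ hS
      (lp.evalCLM ℝ (fun _ : ℕ => StrongDual ℝ X) q i).continuous_weakTop
  · rw [lpStateSpace_eq_setOf hpq' hxs]
    exact isCompact_weakTop_lp hq
      (fun j => (isCompact_weakTop_scaledStateSpace_iff hpq'.lt (xs j)).2 (hK j))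
      (xs.2.summable hpq'.pos) fun j _ hh => norm_rpow_of_mem_scaledStateSpace hpq' hh

/-- Let `(x_i) ∈ ℓ^p(X)` be a unit vector.  The state space
`S_{(x_i)} = {(x_i*) ∈ ℓ^q(X*) : ‖(x_i*)‖_q = 1, ∑ x_i*(x_i) = 1}` is weakly compact
iff for each `i` with `x_i ≠ 0` the state space `S_{x_i/‖x_i‖} ⊆ X*` is weakly compact. -/
theorem stmt8 {X : Type*} [NormedAddCommGroup X] [NormedSpace ℝ X] [CompleteSpace X]
    (p q : ENNReal) [Fact (1 ≤ p)] [Fact (1 ≤ q)]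
    (hp : 1 < p) (hp' : p ≠ ⊤) (hpq : 1 / p + 1 / q = 1)
    (xs : lp (fun _ : ℕ => X) p) (hxs : ‖xs‖ = 1) :
    @IsCompact _ (wTop q) {ψ : lp (fun _ : ℕ => StrongDual ℝ X) q |
        ‖ψ‖ = 1 ∧ ∑' i, ψ i (xs i) = 1} ↔
      ∀ i, xs i ≠ 0 → @IsCompact _ (wTopDual X)
        {g : StrongDual ℝ X | ‖g‖ = 1 ∧ g (‖xs i‖⁻¹ • xs i) = 1} :=
  stmt8_general p q hp hp' hpq xs hxs
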